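/- For Δ = 0, N ≤ L, with u(ξ,x) = Σ_{σ∈S_N} sgn(σ) ∏_i ξ_{σ(i)}^{x_i} and ℓ(y,ξ) = Σ_{σ∈S_N} sgn(σ) ∏_i ξ_{σ(i)}^{-y_i}/L, and summing ξ over all N-tuples (φη^{k_1},...,φη^{k_N}) with k_i ∈ {1,...,L} (with η = e^{2πi/L} and φ = e^{πi/L} if N is even, φ = 1 if N is odd), one has (1/N!) Σ_{k_1,...,k_N=1}^{L} ℓ(y, ξ(k)) u(ξ(k), x) = 1 if x = y and 0 otherwise, for all strictly increasing tuples x, y ∈ {0,...,L-1}^N. -/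

import Mathlib

open Finset

/-- Free-fermion (`Δ = 0`) Bethe coordinate function `u(ξ,x)`. -/
noncomputable def betheU0 (N : ℕ) (ξ : Fin N → ℂ) (x : Fin N → ℤ) : ℂ :=
  ∑ σ : Equiv.Perm (Fin N), ((Equiv.Perm.sign σ : ℤ) : ℂ) * ∏ i, ξ (σ i) ^ x i

/-- Free-fermion (`Δ = 0`) inverse-transform coefficient `ℓ(y,ξ)`. -/
noncomputable def betheL0 (L N : ℕ) (ξ : Fin N → ℂ) (y : Fin N → ℤ) : ℂ :=
  ∑ σ : Equiv.Perm (Fin N), ((Equiv.Perm.sign σ : ℤ) : ℂ) * ∏ i, ξ (σ i) ^ (-(y i)) / (L : ℂ)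

/-- The `Δ = 0` Bethe roots `ξ(k) = (φη^{k_1}, …, φη^{k_N})`. -/
noncomputable def betheRoots0 (L N : ℕ) (k : Fin N → Fin L) : Fin N → ℂ := fun i =>
  (if Even N then Complex.exp ((Real.pi : ℂ) * Complex.I / (L : ℂ)) else 1) *
    Complex.exp (2 * (Real.pi : ℂ) * Complex.I * ((k i : ℕ) : ℂ) / (L : ℂ))

/-- Geometric-sum orthogonality: `Σ_{m=0}^{L-1} (c η^m)^a = L·𝟙(a=0)` for `|a| < L`. -/
lemma betheKeySum (L : ℕ) (hL : 0 < L) (c : ℂ) (a : ℤ) (ha : a.natAbs < L) :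
    ∑ m : Fin L, (c * Complex.exp (2 * (Real.pi : ℂ) * Complex.I * ((m : ℕ) : ℂ) / (L : ℂ))) ^ a
      = if a = 0 then (L : ℂ) else 0 := by
  have hL0 : (L : ℂ) ≠ 0 := Nat.cast_ne_zero.mpr hL.ne'
  by_cases h0 : a = 0
  · simp [h0]
  · rw [if_neg h0]
    set z : ℂ := Complex.exp (2 * (Real.pi : ℂ) * Complex.I * (a : ℂ) / (L : ℂ)) with hz
    have hterm : ∀ m : Fin L,
        (c * Complex.exp (2 * (Real.pi : ℂ) * Complex.I * ((m : ℕ) : ℂ) / (L : ℂ))) ^ a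
          = c ^ a * z ^ (m : ℕ) := by
      intro m
      rw [mul_zpow, hz, ← Complex.exp_int_mul, ← Complex.exp_nat_mul]
      congr 2
      ring
    have hzL : z ^ L = 1 := by
      rw [hz, ← Complex.exp_nat_mul]
      have : (L : ℂ) * (2 * (Real.pi : ℂ) * Complex.I * (a : ℂ) / (L : ℂ))
          = (a : ℂ) * (2 * (Real.pi : ℂ) * Complex.I) := by
        field_simp
      rw [this]
      exact Complex.exp_int_mul_two_pi_mul_I a
    have h2pi : (2 * (Real.pi : ℂ) * Complex.I) ≠ 0 := by
      simp [Real.pi_ne_zero, Complex.I_ne_zero, Complex.ofReal_ne_zero]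
    have hz1 : z ≠ 1 := by
      intro h
      rw [hz, Complex.exp_eq_one_iff] at h
      obtain ⟨n, hn⟩ := h
      have hC : (2 * (Real.pi : ℂ) * Complex.I) * (a : ℂ)
          = (2 * (Real.pi : ℂ) * Complex.I) * ((n : ℂ) * (L : ℂ)) := by
        field_simp at hn
        linear_combination (2 * (Real.pi : ℂ) * Complex.I) * hn
      have hzc : (a : ℂ) = ((n * L : ℤ) : ℂ) := by
        push_cast
        exact mul_left_cancel₀ h2pi hC
      have haz : a = n * L := by exact_mod_cast hzc
      have hn0 : n ≠ 0 := by
        rintro rfl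
        simp at haz
        exact h0 haz
      have : L ≤ a.natAbs := by
        rw [haz, Int.natAbs_mul, Int.natAbs_natCast]
        have h1n : 1 ≤ n.natAbs := Nat.one_le_iff_ne_zero.mpr (Int.natAbs_ne_zero.mpr hn0)
        calc L = 1 * L := (one_mul L).symm
        _ ≤ n.natAbs * L := Nat.mul_le_mul_right L h1n
      omega
    calc ∑ m : Fin L, (c * Complex.exp (2 * (Real.pi : ℂ) * Complex.I * ((m : ℕ) : ℂ) / (L : ℂ))) ^ a
        = ∑ m : Fin L, c ^ a * z ^ (m : ℕ) := by exact Finset.sum_congr rfl fun m _ => hterm m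
      _ = c ^ a * ∑ m ∈ Finset.range L, z ^ m := by
          rw [Finset.mul_sum, Fin.sum_univ_eq_sum_range (fun m => c ^ a * z ^ m) L]
      _ = c ^ a * ((z ^ L - 1) / (z - 1)) := by rw [geom_sum_eq hz1]
      _ = 0 := by rw [hzL]; simp

/-- The `Δ = 0` inversion identity:
`(1/N!) Σ_{k_1,…,k_N=1}^{L} ℓ(y, ξ(k)) u(ξ(k), x) = 𝟙(x = y)`. -/
theorem stmt5 (L N : ℕ) (hL : 0 < L) (hN : N ≤ L)
    (x y : Fin N → Fin L) (hx : StrictMono x) (hy : StrictMono y) :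
    (1 / (N.factorial : ℂ)) * ∑ k : Fin N → Fin L,
        betheL0 L N (betheRoots0 L N k) (fun i => ((y i : ℕ) : ℤ)) *
          betheU0 N (betheRoots0 L N k) (fun i => ((x i : ℕ) : ℤ))
      = if x = y then 1 else 0 := by
  classical
  set φ : ℂ := if Even N then Complex.exp ((Real.pi : ℂ) * Complex.I / (L : ℂ)) else 1 with hφ
  have hφ0 : φ ≠ 0 := by
    rw [hφ]; split
    · exact Complex.exp_ne_zero _
    · exact one_ne_zero
  set F : Fin L → ℂ := fun m =>
    φ * Complex.exp (2 * (Real.pi : ℂ) * Complex.I * ((m : ℕ) : ℂ) / (L : ℂ)) with hFdef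
  have hF0 : ∀ m, F m ≠ 0 := fun m => mul_ne_zero hφ0 (Complex.exp_ne_zero _)
  have hroots : ∀ k : Fin N → Fin L, betheRoots0 L N k = fun i => F (k i) := fun k => rfl
  -- the integer exponent for a pair of permutations
  set a : Equiv.Perm (Fin N) → Equiv.Perm (Fin N) → Fin N → ℤ :=
    fun σ τ j => ((x (τ⁻¹ j) : ℕ) : ℤ) - ((y (σ⁻¹ j) : ℕ) : ℤ) with ha
  have hkey : ∀ σ τ : Equiv.Perm (Fin N), ∀ j : Fin N,
      ∑ m : Fin L, (F m) ^ (a σ τ j) / (L : ℂ) = if a σ τ j = 0 then 1 else 0 := by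
    intro σ τ j
    have hbound : (a σ τ j).natAbs < L := by
      have h1 : (x (τ⁻¹ j) : ℕ) < L := (x (τ⁻¹ j)).isLt
      have h2 : (y (σ⁻¹ j) : ℕ) < L := (y (σ⁻¹ j)).isLt
      simp only [ha]
      omega
    rw [← Finset.sum_div, betheKeySum L hL φ _ hbound]
    have hL0 : (L : ℂ) ≠ 0 := Nat.cast_ne_zero.mpr hL.ne'
    split
    · exact div_self hL0
    · exact zero_div _
  -- condition characterization
  have hcond : ∀ σ τ : Equiv.Perm (Fin N),
      (∀ j, a σ τ j = 0) ↔ (x = y ∧ σ = τ) := by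
    intro σ τ
    constructor
    · intro h
      have hfin : ∀ j, x (τ⁻¹ j) = y (σ⁻¹ j) := by
        intro j
        have := h j
        simp only [ha, sub_eq_zero] at this
        exact Fin.ext (by exact_mod_cast this)
      have hcomp : x = y ∘ (σ⁻¹ * τ : Equiv.Perm (Fin N)) := by
        funext i
        have := hfin (τ i)
        simpa using this
      have hrange : Set.range x = Set.range y := by
        rw [hcomp, Set.range_comp]
        rw [Equiv.range_eq_univ, Set.image_univ]
      haveI : WellFoundedLT (Fin N) := inferInstance
      have hxy : x = y := (StrictMono.range_inj hx hy).mp hrange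
      have hστ : σ = τ := by
        apply Equiv.ext; intro i
        have h1 : x i = y ((σ⁻¹ * τ : Equiv.Perm (Fin N)) i) := congrFun hcomp i
        rw [hxy] at h1
        have h2 : (σ⁻¹ * τ : Equiv.Perm (Fin N)) i = i := hy.injective h1.symm
        simp only [Equiv.Perm.mul_apply] at h2
        have h3 := congrArg σ h2
        simpa using h3.symm
      exact ⟨hxy, hστ⟩
    · rintro ⟨hxy, hστ⟩ j
      simp [ha, hxy, hστ]
  -- main computation
  have hmain : ∑ k : Fin N → Fin L,
      betheL0 L N (betheRoots0 L N k) (fun i => ((y i : ℕ) : ℤ)) *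
        betheU0 N (betheRoots0 L N k) (fun i => ((x i : ℕ) : ℤ))
      = ∑ σ : Equiv.Perm (Fin N), ∑ τ : Equiv.Perm (Fin N),
          (((Equiv.Perm.sign σ : ℤ) : ℂ) * ((Equiv.Perm.sign τ : ℤ) : ℂ)) *
            (if x = y ∧ σ = τ then 1 else 0) := by
    have step1 : ∀ k : Fin N → Fin L,
        betheL0 L N (betheRoots0 L N k) (fun i => ((y i : ℕ) : ℤ)) *
          betheU0 N (betheRoots0 L N k) (fun i => ((x i : ℕ) : ℤ))
        = ∑ σ : Equiv.Perm (Fin N), ∑ τ : Equiv.Perm (Fin N),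
            (((Equiv.Perm.sign σ : ℤ) : ℂ) * ((Equiv.Perm.sign τ : ℤ) : ℂ)) *
              ∏ j, ((F (k j)) ^ (a σ τ j) / (L : ℂ)) := by
      intro k
      rw [hroots, betheL0, betheU0, Finset.sum_mul_sum]
      refine Finset.sum_congr rfl fun σ _ => Finset.sum_congr rfl fun τ _ => ?_
      have hmerge : ∏ j, ((F (k j)) ^ (a σ τ j) / (L : ℂ))
          = (∏ i, (F (k (σ i)) ^ (-(((y i : ℕ) : ℤ))) / (L : ℂ))) *
              ∏ i, F (k (τ i)) ^ (((x i : ℕ) : ℤ)) := by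
        calc ∏ j, ((F (k j)) ^ (a σ τ j) / (L : ℂ))
            = ∏ j, ((F (k j) ^ (-(((y (σ⁻¹ j) : ℕ) : ℤ))) / (L : ℂ)) *
                F (k j) ^ (((x (τ⁻¹ j) : ℕ) : ℤ))) := by
              refine Finset.prod_congr rfl fun j _ => ?_
              rw [div_mul_eq_mul_div, ← zpow_add₀ (hF0 (k j))]
              congr 2
              simp only [ha]
              ring
          _ = (∏ j, (F (k j) ^ (-(((y (σ⁻¹ j) : ℕ) : ℤ))) / (L : ℂ))) *
                ∏ j, F (k j) ^ (((x (τ⁻¹ j) : ℕ) : ℤ)) := Finset.prod_mul_distrib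
          _ = _ := by
              rw [← Equiv.prod_comp σ
                  (fun j => F (k j) ^ (-(((y (σ⁻¹ j) : ℕ) : ℤ))) / (L : ℂ)),
                ← Equiv.prod_comp τ (fun j => F (k j) ^ (((x (τ⁻¹ j) : ℕ) : ℤ)))]
              simp
      rw [hmerge]
      ring
    rw [Finset.sum_congr rfl fun k _ => step1 k, Finset.sum_comm]
    refine Finset.sum_congr rfl fun σ _ => ?_
    rw [Finset.sum_comm]
    refine Finset.sum_congr rfl fun τ _ => ?_
    rw [← Finset.mul_sum]
    congr 1
    have : ∑ k : Fin N → Fin L, ∏ j, ((F (k j)) ^ (a σ τ j) / (L : ℂ))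
        = ∏ j, ∑ m : Fin L, ((F m) ^ (a σ τ j) / (L : ℂ)) := by
      rw [Finset.prod_univ_sum (fun _ => Finset.univ)
        (fun j m => (F m) ^ (a σ τ j) / (L : ℂ)), Fintype.piFinset_univ]
    rw [this]
    rw [Finset.prod_congr rfl fun j _ => hkey σ τ j, Finset.prod_boole]
    simp only [Finset.mem_univ, forall_true_left, true_implies]
    by_cases h : ∀ j, a σ τ j = 0
    · rw [if_pos h, if_pos ((hcond σ τ).mp h)]
    · rw [if_neg h, if_neg (fun hc => h ((hcond σ τ).mpr hc))]
  rw [hmain]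
  by_cases hxy : x = y
  · simp only [hxy, true_and, if_pos rfl]
    have hinner : ∀ σ : Equiv.Perm (Fin N),
        ∑ τ : Equiv.Perm (Fin N),
          (((Equiv.Perm.sign σ : ℤ) : ℂ) * ((Equiv.Perm.sign τ : ℤ) : ℂ)) *
            (if σ = τ then 1 else 0) = 1 := by
      intro σ
      rw [Finset.sum_eq_single σ]
      · have : ((Equiv.Perm.sign σ : ℤ) : ℂ) * ((Equiv.Perm.sign σ : ℤ) : ℂ) = 1 := by
          have h1 : (Equiv.Perm.sign σ : ℤ) * (Equiv.Perm.sign σ : ℤ) = 1 := by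
            rcases Int.units_eq_one_or (Equiv.Perm.sign σ) with h | h <;> simp [h]
          calc ((Equiv.Perm.sign σ : ℤ) : ℂ) * ((Equiv.Perm.sign σ : ℤ) : ℂ)
              = (((Equiv.Perm.sign σ : ℤ) * (Equiv.Perm.sign σ : ℤ) : ℤ) : ℂ) := by push_cast; ring
            _ = 1 := by rw [h1]; norm_num
        simp [this]
      · intro τ _ hτ
        simp [Ne.symm hτ]
      · intro h; exact absurd (Finset.mem_univ σ) h
    rw [Finset.sum_congr rfl fun σ _ => hinner σ]
    simp only [Finset.sum_const, Finset.card_univ, Fintype.card_perm, Fintype.card_fin,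
      nsmul_eq_mul, mul_one]
    have hfac : (N.factorial : ℂ) ≠ 0 := Nat.cast_ne_zero.mpr (Nat.factorial_ne_zero N)
    field_simp
    simp
  · simp [hxy]
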